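/- arXiv:2311.17180 — 5 statements merged into one kernel-verified Lean document; each statement's English description precedes it below -/
import Mathlib

section
/- If R solves the 1+1 wave equation R_tt = R_xx on [0,∞)×ℝ, and R_b(t,x) = R_0 e^{2t} cosh(2x) with R_0 > 0, and the initial deviation satisfies ‖R(0,·) − R_b(0,·)‖_{C^0} + ‖R_t(0,·) − ∂_t R_b(0,·)‖_{C^0} < 2R_0/3, then R(t,x) > 0 for all t ≥ 0 and all x ∈ ℝ. -/
/-!
A `C²` solution of the wave equation satisfies d'Alembert's formula
`R t x = (R 0 (x - t) + R 0 (x + t)) / 2 + (∫ y in x - t..x + t, R_t 0 y) / 2`: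
the equation says exactly that `(∂_t + ∂_x) R` is constant along the lines `x + t = const`, and
integrating it along the line `x - t = const` through `(t, x)` gives the formula.
Close to the background the initial data satisfy `R 0 ≥ R₀ - A > 0` and `R_t 0 ≥ 2 R₀ - B > 0`,
so for `t ≥ 0` the first term of the formula is positive and the integral is nonnegative.
-/

open Real

/-- time derivative -/
noncomputable def pt (u : ℝ → ℝ → ℝ) : ℝ → ℝ → ℝ := fun t x => deriv (fun s => u s x) t
/-- space derivative -/
noncomputable def px (u : ℝ → ℝ → ℝ) : ℝ → ℝ → ℝ := fun t x => deriv (fun y => u t y) x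

section LineDerivatives

variable {𝕜 : Type*} [NontriviallyNormedField 𝕜] {E E' G : Type*}
  [NormedAddCommGroup E] [NormedSpace 𝕜 E] [NormedAddCommGroup E'] [NormedSpace 𝕜 E']
  [NormedAddCommGroup G] [NormedSpace 𝕜 G]

theorem hasDerivAt_comp_add_smul {f : E → G} (p v : E) (s : 𝕜)
    (hf : DifferentiableAt 𝕜 f (p + s • v)) :
    HasDerivAt (fun s : 𝕜 => f (p + s • v)) (fderiv 𝕜 f (p + s • v) v) s := by
  have hline : HasDerivAt (fun s : 𝕜 => p + s • v) v s := by
    simpa using ((hasDerivAt_id s).smul_const v).const_add p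
  exact hf.hasFDerivAt.comp_hasDerivAt s hline

theorem fderiv_clm_apply_const {c : E → E' →L[𝕜] G} {x : E} (hc : DifferentiableAt 𝕜 c x)
    (v : E) (w : E') : fderiv 𝕜 (fun y => c y w) x v = fderiv 𝕜 c x v w := by
  simp [fderiv_clm_apply hc (differentiableAt_const w)]

end LineDerivatives

section Partials

variable {𝕜 : Type*} [NontriviallyNormedField 𝕜] {G : Type*} [NormedAddCommGroup G]
  [NormedSpace 𝕜 G] {f : 𝕜 × 𝕜 → G} {t x : 𝕜}

theorem DifferentiableAt.hasDerivAt_fst (hf : DifferentiableAt 𝕜 f (t, x)) :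
    HasDerivAt (fun s => f (s, x)) (fderiv 𝕜 f (t, x) (1, 0)) t :=
  hf.hasFDerivAt.comp_hasDerivAt t ((hasDerivAt_id t).prodMk (hasDerivAt_const t x))

theorem DifferentiableAt.hasDerivAt_snd (hf : DifferentiableAt 𝕜 f (t, x)) :
    HasDerivAt (fun y => f (t, y)) (fderiv 𝕜 f (t, x) (0, 1)) x :=
  hf.hasFDerivAt.comp_hasDerivAt x ((hasDerivAt_const x t).prodMk (hasDerivAt_id x))

end Partials

section WaveEquation

variable {F : ℝ × ℝ → ℝ}

theorem fderiv_fderiv_null_eq_zero_of_wave (hF : ContDiff ℝ 2 F)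
    (hwave : ∀ p, fderiv ℝ (fderiv ℝ F) p (1, 0) (1, 0) = fderiv ℝ (fderiv ℝ F) p (0, 1) (0, 1))
    (p : ℝ × ℝ) : fderiv ℝ (fderiv ℝ F) p (1, -1) (1, 1) = 0 := by
  have hsymm := (hF.contDiffAt (x := p)).isSymmSndFDerivAt (by simp) (1, 0) (0, 1)
  have h₁ : ((1 : ℝ), (-1 : ℝ)) = ((1 : ℝ), (0 : ℝ)) - (0, 1) := by simp
  have h₂ : ((1 : ℝ), (1 : ℝ)) = ((1 : ℝ), (0 : ℝ)) + (0, 1) := by simp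
  rw [h₁, h₂, map_sub, sub_apply, map_add, map_add, hwave p, hsymm]
  ring

theorem fderiv_apply_one_one_eq_of_wave (hF : ContDiff ℝ 2 F)
    (hwave : ∀ p, fderiv ℝ (fderiv ℝ F) p (1, 0) (1, 0) = fderiv ℝ (fderiv ℝ F) p (0, 1) (0, 1))
    (s y : ℝ) : fderiv ℝ F (s, y - s) (1, 1) = fderiv ℝ F (0, y) (1, 1) := by
  have hF' : Differentiable ℝ (fderiv ℝ F) :=
    (hF.fderiv_right (m := 1) (by norm_num)).differentiable (by norm_num)
  have hderiv (σ : ℝ) :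
      HasDerivAt (fun σ : ℝ => fderiv ℝ F ((0, y) + σ • (1, -1)) (1, 1)) 0 σ := by
    have h := hasDerivAt_comp_add_smul (f := fun q => fderiv ℝ F q (1, 1)) ((0 : ℝ), y)
      ((1 : ℝ), (-1 : ℝ)) σ ((hF' _).clm_apply (differentiableAt_const _))
    rwa [fderiv_clm_apply_const (hF' _), fderiv_fderiv_null_eq_zero_of_wave hF hwave] at h
  have hconst := is_const_of_deriv_eq_zero (fun σ => (hderiv σ).differentiableAt)
    (fun σ => (hderiv σ).deriv) s 0
  have hpoint : ((0 : ℝ), y) + s • ((1 : ℝ), (-1 : ℝ)) = (s, y - s) := by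
    ext <;> simp [sub_eq_add_neg]
  rwa [hpoint, zero_smul, add_zero] at hconst

theorem dAlembert_fderiv (hF : ContDiff ℝ 2 F)
    (hwave : ∀ p, fderiv ℝ (fderiv ℝ F) p (1, 0) (1, 0) = fderiv ℝ (fderiv ℝ F) p (0, 1) (0, 1))
    (t x : ℝ) :
    F (t, x) = (F (0, x - t) + F (0, x + t)) / 2
      + (∫ y in (x - t)..(x + t), fderiv ℝ F (0, y) (1, 0)) / 2 := by
  have hFd : Differentiable ℝ F := hF.differentiable (by norm_num)
  set p : ℝ × ℝ := ((t - x) / 2, (x - t) / 2)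
  set v : ℝ × ℝ := (1 / 2, 1 / 2)
  have hpoint (y : ℝ) : p + y • v = ((y - x + t) / 2, y - (y - x + t) / 2) := by
    ext <;> simp [p, v] <;> ring
  have hstart : p + (x - t) • v = (0, x - t) := by ext <;> simp [p, v] <;> ring
  have hend : p + (x + t) • v = (t, x) := by ext <;> simp [p, v] <;> ring
  have hderiv (y : ℝ) : HasDerivAt (fun y => F (p + y • v) - F (0, y) / 2)
      (fderiv ℝ F (0, y) (1, 0) / 2) y := by
    refine ((hasDerivAt_comp_add_smul p v y (hFd _)).sub
      ((hFd _).hasDerivAt_snd.div_const 2)).congr_deriv ?_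
    have hv : v = (1 / 2 : ℝ) • ((1 : ℝ), (1 : ℝ)) := by simp [v]
    have h₁₀ : ((1 : ℝ), (0 : ℝ)) = ((1 : ℝ), (1 : ℝ)) - (0, 1) := by simp
    rw [hpoint, hv, map_smul, fderiv_apply_one_one_eq_of_wave hF hwave, h₁₀, map_sub]
    simp only [one_div, smul_eq_mul]
    ring
  have hcont : Continuous fun y : ℝ => fderiv ℝ F (0, y) (1, 0) / 2 :=
    (((hF.continuous_fderiv (by norm_num)).comp (by fun_prop)).clm_apply
      continuous_const).div_const 2
  have hftc := intervalIntegral.integral_eq_sub_of_hasDerivAt (fun y _ => hderiv y)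
    (hcont.intervalIntegrable (x - t) (x + t))
  rw [intervalIntegral.integral_div, hstart, hend] at hftc
  linarith

end WaveEquation

section Uncurried

variable {R : ℝ → ℝ → ℝ}

theorem pt_eq_fderiv (hR : Differentiable ℝ (fun p : ℝ × ℝ => R p.1 p.2)) :
    pt R = fun t x => fderiv ℝ (fun p : ℝ × ℝ => R p.1 p.2) (t, x) (1, 0) := by
  funext t x
  exact (hR (t, x)).hasDerivAt_fst.deriv

theorem px_eq_fderiv (hR : Differentiable ℝ (fun p : ℝ × ℝ => R p.1 p.2)) :
    px R = fun t x => fderiv ℝ (fun p : ℝ × ℝ => R p.1 p.2) (t, x) (0, 1) := by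
  funext t x
  exact (hR (t, x)).hasDerivAt_snd.deriv

theorem fderiv_fderiv_wave_of_pt_pt_eq_px_px (hR : ContDiff ℝ 2 (fun p : ℝ × ℝ => R p.1 p.2))
    (hwave : ∀ t x, pt (pt R) t x = px (px R) t x) (p : ℝ × ℝ) :
    fderiv ℝ (fderiv ℝ (fun p : ℝ × ℝ => R p.1 p.2)) p (1, 0) (1, 0)
      = fderiv ℝ (fderiv ℝ (fun p : ℝ × ℝ => R p.1 p.2)) p (0, 1) (0, 1) := by
  set F : ℝ × ℝ → ℝ := fun p => R p.1 p.2
  have hFd : Differentiable ℝ F := hR.differentiable (by norm_num)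
  have hF' : Differentiable ℝ (fderiv ℝ F) :=
    (hR.fderiv_right (m := 1) (by norm_num)).differentiable (by norm_num)
  have h := hwave p.1 p.2
  rw [pt_eq_fderiv hFd, px_eq_fderiv hFd,
    pt_eq_fderiv (R := fun t x => fderiv ℝ F (t, x) (1, 0))
      fun q => (hF' q).clm_apply (differentiableAt_const _),
    px_eq_fderiv (R := fun t x => fderiv ℝ F (t, x) (0, 1))
      fun q => (hF' q).clm_apply (differentiableAt_const _)] at h
  simpa only [fderiv_clm_apply_const (hF' _)] using h

theorem dAlembert (hR : ContDiff ℝ 2 (fun p : ℝ × ℝ => R p.1 p.2))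
    (hwave : ∀ t x, pt (pt R) t x = px (px R) t x) (t x : ℝ) :
    R t x = (R 0 (x - t) + R 0 (x + t)) / 2 + (∫ y in (x - t)..(x + t), pt R 0 y) / 2 := by
  rw [pt_eq_fderiv (hR.differentiable (by norm_num))]
  exact dAlembert_fderiv hR (fderiv_fderiv_wave_of_pt_pt_eq_px_px hR hwave) t x

end Uncurried

theorem statement0_general (R : ℝ → ℝ → ℝ) (R₀ : ℝ)
    (Rb : ℝ → ℝ → ℝ)
    (hRb : Rb = fun t x => R₀ * Real.exp (2 * t) * Real.cosh (2 * x))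
    (hsmooth : ContDiff ℝ 2 (fun p : ℝ × ℝ => R p.1 p.2))
    (hwave : ∀ t x, pt (pt R) t x = px (px R) t x)
    (A B : ℝ)
    (hA : ∀ x, |R 0 x - Rb 0 x| ≤ A)
    (hB : ∀ x, |pt R 0 x - pt Rb 0 x| ≤ B)
    (hsmall : A + B < 2 * R₀ / 3) :
    ∀ t x, 0 ≤ t → 0 < R t x := by
  intro t x ht
  have hA₀ : 0 ≤ A := (abs_nonneg _).trans (hA 0)
  have hB₀ : 0 ≤ B := (abs_nonneg _).trans (hB 0)
  have hRb_initial (y : ℝ) : Rb 0 y = R₀ * cosh (2 * y) := by simp [hRb]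
  have hptRb_initial (y : ℝ) : pt Rb 0 y = 2 * R₀ * cosh (2 * y) := by
    have h : HasDerivAt (fun s => R₀ * exp (2 * s) * cosh (2 * y))
        (R₀ * (exp (2 * 0) * (2 * 1)) * cosh (2 * y)) 0 :=
      ((((hasDerivAt_id 0).const_mul 2).exp).const_mul R₀).mul_const _
    simp only [pt, hRb, h.deriv, mul_zero, exp_zero]
    ring
  have hR_initial (y : ℝ) : R₀ - A ≤ R 0 y := by
    have := (abs_le.mp (hA y)).1
    nlinarith [one_le_cosh (2 * y), hRb_initial y]
  have hpt_initial (y : ℝ) : 0 ≤ pt R 0 y := by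
    have := (abs_le.mp (hB y)).1
    nlinarith [one_le_cosh (2 * y), hptRb_initial y]
  have hintegral : 0 ≤ ∫ y in (x - t)..(x + t), pt R 0 y :=
    intervalIntegral.integral_nonneg (by linarith) fun y _ => hpt_initial y
  rw [dAlembert hsmooth hwave t x]
  linarith [hR_initial (x - t), hR_initial (x + t)]

/-- positivity of `R` for small initial deviation from the
double-cusp background `R_b(t,x) = R₀ e^{2t} cosh (2x)`. -/
theorem statement0 (R : ℝ → ℝ → ℝ) (R₀ : ℝ) (hR₀ : 0 < R₀)
    (Rb : ℝ → ℝ → ℝ)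
    (hRb : Rb = fun t x => R₀ * Real.exp (2 * t) * Real.cosh (2 * x))
    (hsmooth : ContDiff ℝ 2 (fun p : ℝ × ℝ => R p.1 p.2))
    (hwave : ∀ t x, pt (pt R) t x = px (px R) t x)
    (A B : ℝ)
    (hA : ∀ x, |R 0 x - Rb 0 x| ≤ A)
    (hB : ∀ x, |pt R 0 x - pt Rb 0 x| ≤ B)
    (hsmall : A + B < 2 * R₀ / 3) :
    ∀ t x, 0 ≤ t → 0 < R t x :=
  statement0_general R R₀ Rb hRb hsmooth hwave A B hA hB hsmall
end

section
/- The functions R_b(t,x) = R_0 e^{2t} cosh(2x), W_b(x) = W_1 + W_0 arctan(e^{2x}), q_b = q_0 (constant) satisfy the system: R_tt − R_xx = 0; W_tt − W_xx + (R_t/R)W_t − (R_x/R)W_x + ((q_t² − q_x²)/2)e^{−4W} = 0; and q_tt − q_xx + (R_t/R)q_t − (R_x/R)q_x − 4q_t W_t + 4q_x W_x = 0. -/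
open Real MeasureTheory Filter

/-!
`W_b` depends on `x` alone and `q_b` is constant, so every `t`-derivative except those of `R_b`
vanishes and the `q`-equation is trivial. `R_b` is a product of `e^{2t}` and `cosh (2x)`, both
eigenfunctions of `d²/ds²` with eigenvalue `4`, so it solves the wave equation. Finally
`(arctan (e^{2x}))' = 1 / cosh (2x)`, so the `W`-equation reduces to
`(1 / cosh (2x))' + 2 tanh (2x) / cosh (2x) = 0`.
-/

section PartialDerivatives

variable (a b f : ℝ → ℝ)

lemma pt_separable_mul : pt (fun t x => a t * b x) = fun t x => deriv a t * b x := by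
  ext t x
  exact congrFun (deriv_mul_const_field' (b x)) t

lemma px_separable_mul : px (fun t x => a t * b x) = fun t x => a t * deriv b x := by
  ext t x
  exact congrFun (deriv_const_mul_field' (a t)) x

lemma pt_const_in_time : pt (fun _ x => f x) = fun _ _ => 0 := by
  ext t x
  exact deriv_const t (f x)

lemma px_const_in_time : px (fun _ x => f x) = fun _ x => deriv f x := rfl

end PartialDerivatives

lemma deriv_exp_mul (k : ℝ) : deriv (fun t => exp (k * t)) = fun t => k * exp (k * t) := by
  ext t
  have h := ((hasDerivAt_id t).const_mul k).exp
  simp only [id, mul_one] at h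
  rw [h.deriv, mul_comm]

lemma deriv_cosh_mul (k : ℝ) : deriv (fun x => cosh (k * x)) = fun x => k * sinh (k * x) := by
  ext x
  have h := ((hasDerivAt_id x).const_mul k).cosh
  simp only [id, mul_one] at h
  rw [h.deriv, mul_comm]

lemma deriv_sinh_mul (k : ℝ) : deriv (fun x => sinh (k * x)) = fun x => k * cosh (k * x) := by
  ext x
  have h := ((hasDerivAt_id x).const_mul k).sinh
  simp only [id, mul_one] at h
  rw [h.deriv, mul_comm]

lemma deriv_arctan_exp_two_mul :
    deriv (fun x => arctan (exp (2 * x))) = fun x => (cosh (2 * x))⁻¹ := by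
  ext x
  have h := (((hasDerivAt_id x).const_mul 2).exp).arctan
  simp only [id, mul_one] at h
  rw [h.deriv, cosh_eq, exp_neg]
  have he : exp (2 * x) ≠ 0 := exp_ne_zero _
  field_simp
  ring

lemma deriv_inv_cosh_mul (k : ℝ) :
    deriv (fun x => (cosh (k * x))⁻¹) = fun x => -(k * sinh (k * x)) / cosh (k * x) ^ 2 := by
  ext x
  have h := ((((hasDerivAt_id x).const_mul k).cosh).inv (cosh_pos _).ne')
  simp only [id, mul_one] at h
  rw [show (fun x => (cosh (k * x))⁻¹) = (fun x => cosh (k * x))⁻¹ from rfl, h.deriv, mul_comm]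

/-- the polarized double-cusp background is an exact solution of
the reduced Einstein (wave map) system. -/
theorem statement3 (R₀ W₀ W₁ q₀ : ℝ) (hR₀ : 0 < R₀)
    (Rb Wb qb : ℝ → ℝ → ℝ)
    (hRb : Rb = fun t x => R₀ * Real.exp (2 * t) * Real.cosh (2 * x))
    (hWb : Wb = fun _ x => W₁ + W₀ * Real.arctan (Real.exp (2 * x)))
    (hqb : qb = fun _ _ => q₀) :
    (∀ t x, pt (pt Rb) t x - px (px Rb) t x = 0) ∧
    (∀ t x, pt (pt Wb) t x - px (px Wb) t x
        + (pt Rb t x / Rb t x) * pt Wb t x - (px Rb t x / Rb t x) * px Wb t x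
        + ((pt qb t x) ^ 2 - (px qb t x) ^ 2) / 2 * Real.exp (-(4 * Wb t x)) = 0) ∧
    (∀ t x, pt (pt qb) t x - px (px qb) t x
        + (pt Rb t x / Rb t x) * pt qb t x - (px Rb t x / Rb t x) * px qb t x
        - 4 * pt qb t x * pt Wb t x + 4 * px qb t x * px Wb t x = 0) := by
  subst hRb hWb hqb
  simp only [pt_separable_mul, px_separable_mul, pt_const_in_time, px_const_in_time,
    deriv_exp_mul, deriv_cosh_mul, deriv_sinh_mul, deriv_arctan_exp_two_mul, deriv_inv_cosh_mul,
    deriv_const_mul_field', deriv_const_add', deriv_const']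
  refine ⟨fun t x => by ring, fun t x => ?_, fun t x => by ring⟩
  have hR : R₀ ≠ 0 := hR₀.ne'
  have he : exp (2 * t) ≠ 0 := exp_ne_zero _
  have hc : cosh (2 * x) ≠ 0 := (cosh_pos _).ne'
  field_simp
  ring
end

section
/- With R_b(t,x) = R_0 e^{2t} cosh(2x), W_b(x) = W_1 + W_0 arctan(e^{2x}), q_b = q_0, the function a_b(t,x) = a_0 − (1/2 + W_0²/2)(1/2) ln(cosh(2x)) + (3/2 + W_0²/2) t satisfies the wave equation a_tt − a_xx + (R_x² − R_t²)/(4R²) + W_t² − W_x² + (1/4)(q_t² − q_x²)e^{−4W} = 0, with (R,W,q) = (R_b,W_b,q_b). -/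
/-!
All three profiles separate into a function of `t` plus a function of `x` (or a product of
such), so every term is explicit. With `c = cosh (2x)`: `a_tt = 0` and
`a_xx = -(1 + W₀²) / c²` since `(log cosh)'' = 1 / cosh²`; `W_t = 0` and `W_x = W₀ / c` since
`(arctan ∘ exp)' = 1 / (2 cosh)`; `R_t = 2R` and `R_x = 2R tanh (2x)`, so
`(R_x² - R_t²) / (4R²) = -1 / c²`; and `q` is constant. The terms cancel.
-/

open Real MeasureTheory Filter

theorem hasDerivAt_tanh (x : ℝ) : HasDerivAt tanh (1 / cosh x ^ 2) x := by
  have h := (hasDerivAt_sinh x).div (hasDerivAt_cosh x) (cosh_pos x).ne'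
  rw [show sinh / cosh = tanh from funext fun y => (tanh_eq_sinh_div_cosh y).symm] at h
  exact h.congr_deriv (by rw [← cosh_sq_sub_sinh_sq x]; ring)

@[fun_prop]
theorem differentiable_tanh : Differentiable ℝ tanh :=
  fun x => (hasDerivAt_tanh x).differentiableAt

theorem hasDerivAt_log_cosh (x : ℝ) : HasDerivAt (fun y => log (cosh y)) (tanh x) x := by
  rw [tanh_eq_sinh_div_cosh]
  exact (hasDerivAt_cosh x).log (cosh_pos x).ne'

theorem hasDerivAt_arctan_exp (x : ℝ) :
    HasDerivAt (fun y => arctan (exp y)) (1 / (2 * cosh x)) x := by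
  convert (hasDerivAt_exp x).arctan using 1
  rw [cosh_eq, exp_neg]
  field_simp
  ring

theorem deriv_log_cosh_mul_left (c x : ℝ) :
    deriv (fun y => log (cosh (c * y))) x = c * tanh (c * x) :=
  (deriv_comp_mul_left c (fun y => log (cosh y)) x).trans
    (by rw [(hasDerivAt_log_cosh _).deriv, smul_eq_mul])

theorem deriv_tanh_mul_left (c x : ℝ) :
    deriv (fun y => tanh (c * y)) x = c / cosh (c * x) ^ 2 :=
  (deriv_comp_mul_left c tanh x).trans (by rw [(hasDerivAt_tanh _).deriv, smul_eq_mul, mul_one_div])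

theorem deriv_arctan_exp_mul_left (c x : ℝ) :
    deriv (fun y => arctan (exp (c * y))) x = c / (2 * cosh (c * x)) :=
  (deriv_comp_mul_left c (fun y => arctan (exp y)) x).trans
    (by rw [(hasDerivAt_arctan_exp _).deriv, smul_eq_mul, mul_one_div])

theorem deriv_exp_mul_left (c x : ℝ) : deriv (fun y => exp (c * y)) x = c * exp (c * x) :=
  (deriv_comp_mul_left c exp x).trans (by rw [Real.deriv_exp, smul_eq_mul])

theorem deriv_cosh_mul_left (c x : ℝ) : deriv (fun y => cosh (c * y)) x = c * sinh (c * x) :=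
  (deriv_comp_mul_left c cosh x).trans (by rw [Real.deriv_cosh, smul_eq_mul])

theorem pt_static (f : ℝ → ℝ) (t x : ℝ) : pt (fun _ y => f y) t x = 0 := by
  simp [pt]

theorem px_homogeneous (g : ℝ → ℝ) (t x : ℝ) : px (fun s _ => g s) t x = 0 := by
  simp [px]

noncomputable def doubleCuspR (R₀ : ℝ) : ℝ → ℝ → ℝ :=
  fun t x => R₀ * exp (2 * t) * cosh (2 * x)

noncomputable def doubleCuspW (W₀ W₁ : ℝ) : ℝ → ℝ → ℝ :=
  fun _ x => W₁ + W₀ * arctan (exp (2 * x))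

noncomputable def doubleCuspA (W₀ a₀ : ℝ) : ℝ → ℝ → ℝ :=
  fun t x => a₀ - (1 / 2 + W₀ ^ 2 / 2) * (1 / 2) * log (cosh (2 * x))
    + (3 / 2 + W₀ ^ 2 / 2) * t

section DoubleCusp

variable (R₀ W₀ W₁ a₀ t x : ℝ)

theorem pt_doubleCuspR : pt (doubleCuspR R₀) t x = 2 * doubleCuspR R₀ t x := by
  simp only [pt, doubleCuspR]
  rw [deriv_mul_const (by fun_prop), deriv_const_mul _ (by fun_prop), deriv_exp_mul_left]
  ring

theorem px_doubleCuspR : px (doubleCuspR R₀) t x = 2 * R₀ * exp (2 * t) * sinh (2 * x) := by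
  simp only [px, doubleCuspR]
  rw [deriv_const_mul _ (by fun_prop), deriv_cosh_mul_left]
  ring

theorem px_sq_sub_pt_sq_div_doubleCuspR (hR₀ : R₀ ≠ 0) :
    ((px (doubleCuspR R₀) t x) ^ 2 - (pt (doubleCuspR R₀) t x) ^ 2)
      / (4 * (doubleCuspR R₀ t x) ^ 2) = -1 / cosh (2 * x) ^ 2 := by
  rw [pt_doubleCuspR, px_doubleCuspR, doubleCuspR, ← cosh_sq_sub_sinh_sq (2 * x)]
  have := cosh_pos (2 * x)
  field_simp
  ring

theorem pt_doubleCuspW : pt (doubleCuspW W₀ W₁) t x = 0 := pt_static _ t x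

theorem px_doubleCuspW : px (doubleCuspW W₀ W₁) t x = W₀ / cosh (2 * x) := by
  simp only [px, doubleCuspW]
  rw [deriv_const_add, deriv_const_mul _ (DifferentiableAt.arctan (by fun_prop)),
    deriv_arctan_exp_mul_left]
  have := cosh_pos (2 * x)
  field_simp

theorem pt_pt_doubleCuspA : pt (pt (doubleCuspA W₀ a₀)) t x = 0 := by
  have : pt (doubleCuspA W₀ a₀) = fun _ _ => 3 / 2 + W₀ ^ 2 / 2 := by
    funext s y
    simp only [pt, doubleCuspA]
    rw [deriv_const_add, deriv_const_mul _ differentiableAt_id, deriv_id'', mul_one]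
  rw [this, pt_static]

theorem px_px_doubleCuspA :
    px (px (doubleCuspA W₀ a₀)) t x = -(1 + W₀ ^ 2) / cosh (2 * x) ^ 2 := by
  have : px (doubleCuspA W₀ a₀) = fun _ y => -(1 / 2 + W₀ ^ 2 / 2) * tanh (2 * y) := by
    funext s y
    simp only [px, doubleCuspA]
    rw [deriv_add_const, deriv_const_sub,
      deriv_const_mul _ (by fun_prop (disch := exact (cosh_pos _).ne')),
      deriv_log_cosh_mul_left]
    ring
  rw [px, this]
  dsimp only
  rw [deriv_const_mul _ (by fun_prop), deriv_tanh_mul_left]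
  ring

end DoubleCusp

/-- the conformal factor $a_b$ of the double-cusp solution
satisfies its evolution equation. -/
theorem statement4 (R₀ W₀ W₁ q₀ a₀ : ℝ) (hR₀ : 0 < R₀)
    (Rb Wb qb ab : ℝ → ℝ → ℝ)
    (hRb : Rb = fun t x => R₀ * Real.exp (2 * t) * Real.cosh (2 * x))
    (hWb : Wb = fun _ x => W₁ + W₀ * Real.arctan (Real.exp (2 * x)))
    (hqb : qb = fun _ _ => q₀)
    (hab : ab = fun t x => a₀ - (1 / 2 + W₀ ^ 2 / 2) * (1 / 2) * Real.log (Real.cosh (2 * x))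
        + (3 / 2 + W₀ ^ 2 / 2) * t) :
    ∀ t x, pt (pt ab) t x - px (px ab) t x
        + ((px Rb t x) ^ 2 - (pt Rb t x) ^ 2) / (4 * (Rb t x) ^ 2)
        + (pt Wb t x) ^ 2 - (px Wb t x) ^ 2
        + (1 / 4) * ((pt qb t x) ^ 2 - (px qb t x) ^ 2) * Real.exp (-(4 * Wb t x)) = 0 := by
  intro t x
  obtain rfl : Rb = doubleCuspR R₀ := hRb
  obtain rfl : Wb = doubleCuspW W₀ W₁ := hWb
  obtain rfl : ab = doubleCuspA W₀ a₀ := hab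
  subst hqb
  rw [pt_pt_doubleCuspA, px_px_doubleCuspA, px_sq_sub_pt_sq_div_doubleCuspR R₀ t x hR₀.ne',
    pt_doubleCuspW, px_doubleCuspW, pt_static, px_homogeneous]
  have := cosh_pos (2 * x)
  field_simp
  ring
end

section
/- Let G_b(x) = 1/cosh²(2x) and suppose R > 0 is a C^1 function on [0,∞)×ℝ with (1/d) ≤ R_b/R ≤ d for a constant d, where R_b = R_0 e^{2t} cosh(2x), and ‖(R−R_b)(t,·)‖_∞ ≤ (t+1)m, ‖(R_x−∂_x R_b)(t,·)‖_∞ ≤ m, ‖(R_t−∂_t R_b)(t,·)‖_∞ ≤ m for all t ≥ 0. Then there is a constant C (depending only on d and R_0) such that for all t ≥ 0 and x ∈ ℝ: |R_t/R − ∂_t R_b/R_b| ≤ C(t+1)m/(e^{2t}cosh 2x), |R_x/R − ∂_x R_b/R_b| ≤ C(t+1)m/(e^{2t}cosh 2x), and |G − G_b| ≤ C(t+1)m/(e^{2t}cosh 2x), where G = (R_t² − R_x²)/(4R²). -/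
/-
Write `R = R_b + O((t + 1) m)` and `∂R = ∂R_b + O(m)`. Since `|∂R_b| ≤ 2 R_b` and `R_b ≤ d R`,
the logarithmic derivatives `∂R / R` and `∂R_b / R_b` differ by at most `ε = 3 d (t + 1) m / R_b`.
Both `G` and `G_b` are `((∂_t log)² - (∂_x log)²) / 4`, with all logarithmic derivatives bounded by
`2 + ε`, so `|G - G_b| ≤ (2 + ε) ε`. Finally `t + 1 ≤ e^{2t} cosh 2x` bounds `ε` by `3 d m / R₀`.
-/

open Real

lemma abs_sinh_le_cosh (x : ℝ) : |sinh x| ≤ cosh x := by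
  rw [abs_sinh, ← cosh_abs]
  exact (sinh_lt_cosh _).le

section Background

variable (R₀ t x : ℝ)

lemma pt_background :
    pt (fun t x => R₀ * exp (2 * t) * cosh (2 * x)) t x = 2 * (R₀ * exp (2 * t) * cosh (2 * x)) := by
  have h : HasDerivAt (fun s => R₀ * exp (2 * s) * cosh (2 * x))
      (2 * (R₀ * exp (2 * t) * cosh (2 * x))) t :=
    ((((hasDerivAt_id' t).const_mul 2).exp.const_mul R₀).mul_const _).congr_deriv (by ring)
  exact h.deriv

lemma px_background :
    px (fun t x => R₀ * exp (2 * t) * cosh (2 * x)) t x = 2 * (R₀ * exp (2 * t) * sinh (2 * x)) := by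
  have h : HasDerivAt (fun y => R₀ * exp (2 * t) * cosh (2 * y))
      (2 * (R₀ * exp (2 * t) * sinh (2 * x))) x :=
    (((hasDerivAt_id' x).const_mul 2).cosh.const_mul _).congr_deriv (by ring)
  exact h.deriv

lemma abs_px_background_le {R₀ : ℝ} (hR₀ : 0 ≤ R₀) :
    |2 * (R₀ * exp (2 * t) * sinh (2 * x))| ≤ 2 * (R₀ * exp (2 * t) * cosh (2 * x)) := by
  rw [abs_mul, abs_two, abs_mul, abs_of_nonneg (by positivity : 0 ≤ R₀ * exp (2 * t))]
  gcongr
  exact abs_sinh_le_cosh _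

lemma background_potential {R₀ : ℝ} (hR₀ : R₀ ≠ 0) :
    ((2 * (R₀ * exp (2 * t) * cosh (2 * x))) ^ 2 - (2 * (R₀ * exp (2 * t) * sinh (2 * x))) ^ 2)
      / (4 * (R₀ * exp (2 * t) * cosh (2 * x)) ^ 2) = 1 / cosh (2 * x) ^ 2 := by
  have := cosh_pos (2 * x)
  field_simp
  linear_combination 4 * cosh_sq_sub_sinh_sq (2 * x)

end Background

lemma abs_div_sub_div_le {d E B r D Db : ℝ} (hB : 0 < B) (hr : 0 < r) (hBr : B ≤ d * r) (hDb : |Db| ≤ 2 * B)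
    (hD : |D - Db| ≤ E) (hrB : |r - B| ≤ E) : |D / r - Db / B| ≤ 3 * d * E / B := by
  have hE : 0 ≤ E := (abs_nonneg _).trans hD
  have hnum : |(D - Db) * B - Db * (r - B)| ≤ 3 * E * B := calc
    _ ≤ |D - Db| * B + |Db| * |r - B| :=
      (abs_sub _ _).trans_eq (by rw [abs_mul, abs_mul, abs_of_pos hB])
    _ ≤ E * B + 2 * B * E := by gcongr
    _ = 3 * E * B := by ring
  calc |D / r - Db / B| = |((D - Db) * B - Db * (r - B)) / (r * B)| := by
        congr 1; field_simp; ring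
    _ = |(D - Db) * B - Db * (r - B)| / (r * B) := by rw [abs_div, abs_of_pos (mul_pos hr hB)]
    _ ≤ 3 * E * B / (r * B) := by gcongr
    _ = 3 * E / r := by field_simp
    _ ≤ 3 * d * E / B := by rw [div_le_div_iff₀ hr hB]; nlinarith

lemma abs_sq_sub_sq_le {a a' M : ℝ} (ha : |a| ≤ M) (ha' : |a'| ≤ M) :
    |a ^ 2 - a' ^ 2| ≤ 2 * M * |a - a'| := by
  rw [sq_sub_sq, abs_mul]
  gcongr
  linarith [abs_add_le a a']

lemma sq_sub_sq_div_four_mul_sq (p q r : ℝ) :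
    (p ^ 2 - q ^ 2) / (4 * r ^ 2) = ((p / r) ^ 2 - (q / r) ^ 2) / 4 := by
  rw [div_pow, div_pow, ← sub_div, div_div, mul_comm]

lemma abs_sq_sub_sq_div_four_sub_le {a b a' b' e : ℝ} (ha' : |a'| ≤ 2) (hb' : |b'| ≤ 2)
    (ha : |a - a'| ≤ e) (hb : |b - b'| ≤ e) :
    |(a ^ 2 - b ^ 2) / 4 - (a' ^ 2 - b' ^ 2) / 4| ≤ (2 + e) * e := by
  have he : 0 ≤ e := (abs_nonneg _).trans ha
  have hsa : |a ^ 2 - a' ^ 2| ≤ 2 * (2 + e) * |a - a'| :=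
    abs_sq_sub_sq_le (by linarith [abs_sub_abs_le_abs_sub a a']) (by linarith)
  have hsb : |b ^ 2 - b' ^ 2| ≤ 2 * (2 + e) * |b - b'| :=
    abs_sq_sub_sq_le (by linarith [abs_sub_abs_le_abs_sub b b']) (by linarith)
  rw [← sub_div, abs_div, abs_of_pos (four_pos : (0 : ℝ) < 4), div_le_iff₀ four_pos]
  calc |a ^ 2 - b ^ 2 - (a' ^ 2 - b' ^ 2)| ≤ |a ^ 2 - a' ^ 2| + |b ^ 2 - b' ^ 2| := by
        rw [show a ^ 2 - b ^ 2 - (a' ^ 2 - b' ^ 2) = (a ^ 2 - a' ^ 2) - (b ^ 2 - b' ^ 2) by ring]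
        exact abs_sub _ _
    _ ≤ 2 * (2 + e) * e + 2 * (2 + e) * e :=
        add_le_add (hsa.trans (by gcongr)) (hsb.trans (by gcongr))
    _ = (2 + e) * e * 4 := by ring

lemma abs_div_le_two {B D : ℝ} (hB : 0 < B) (hD : |D| ≤ 2 * B) : |D / B| ≤ 2 := by
  rwa [abs_div, abs_of_pos hB, div_le_iff₀ hB]

lemma coefficient_estimates_at {d E r B Dt Dx Dbt Dbx : ℝ} (hB : 0 < B) (hr : 0 < r)
    (hBr : B ≤ d * r) (hbt : |Dbt| ≤ 2 * B) (hbx : |Dbx| ≤ 2 * B) (hrB : |r - B| ≤ E)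
    (ht : |Dt - Dbt| ≤ E) (hx : |Dx - Dbx| ≤ E) :
    |Dt / r - Dbt / B| ≤ 3 * d * E / B ∧ |Dx / r - Dbx / B| ≤ 3 * d * E / B ∧
      |(Dt ^ 2 - Dx ^ 2) / (4 * r ^ 2) - (Dbt ^ 2 - Dbx ^ 2) / (4 * B ^ 2)|
        ≤ (2 + 3 * d * E / B) * (3 * d * E / B) := by
  have het := abs_div_sub_div_le hB hr hBr hbt ht hrB
  have hex := abs_div_sub_div_le hB hr hBr hbx hx hrB
  refine ⟨het, hex, ?_⟩
  rw [sq_sub_sq_div_four_mul_sq, sq_sub_sq_div_four_mul_sq]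
  exact abs_sq_sub_sq_div_four_sub_le (abs_div_le_two hB hbt) (abs_div_le_two hB hbx) het hex

lemma add_one_le_exp_two_mul_mul_cosh {t : ℝ} (ht : 0 ≤ t) (x : ℝ) :
    t + 1 ≤ exp (2 * t) * cosh (2 * x) := calc
  t + 1 ≤ exp t := add_one_le_exp t
  _ ≤ exp (2 * t) := exp_le_exp.2 (by linarith)
  _ ≤ exp (2 * t) * cosh (2 * x) := le_mul_of_one_le_right (exp_pos _).le (one_le_cosh _)

theorem statement8_general (R₀ m d : ℝ) (hR₀ : 0 < R₀) (hm : 0 ≤ m) (hd : 1 ≤ d)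
    (R Rb : ℝ → ℝ → ℝ)
    (hRb : Rb = fun t x => R₀ * Real.exp (2 * t) * Real.cosh (2 * x))
    (hRpos : ∀ t x, 0 ≤ t → 0 < R t x)
    (hcomp : ∀ t x, 0 ≤ t → 1 / d ≤ Rb t x / R t x ∧ Rb t x / R t x ≤ d)
    (h0 : ∀ t x, 0 ≤ t → |R t x - Rb t x| ≤ (t + 1) * m)
    (hx : ∀ t x, 0 ≤ t → |px R t x - px Rb t x| ≤ m)
    (ht : ∀ t x, 0 ≤ t → |pt R t x - pt Rb t x| ≤ m) :
    ∃ C : ℝ, 0 < C ∧ ∀ t x, 0 ≤ t →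
      |pt R t x / R t x - pt Rb t x / Rb t x|
          ≤ C * (t + 1) * m / (Real.exp (2 * t) * Real.cosh (2 * x)) ∧
      |px R t x / R t x - px Rb t x / Rb t x|
          ≤ C * (t + 1) * m / (Real.exp (2 * t) * Real.cosh (2 * x)) ∧
      |((pt R t x) ^ 2 - (px R t x) ^ 2) / (4 * (R t x) ^ 2) - 1 / (Real.cosh (2 * x)) ^ 2|
          ≤ C * (t + 1) * m / (Real.exp (2 * t) * Real.cosh (2 * x)) := by
  set K := 3 * d * m / R₀
  have hK : 0 ≤ K := by positivity
  refine ⟨3 * d * (2 + K) / R₀, by positivity, fun t x ht₀ => ?_⟩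
  have hRb_tx : Rb t x = R₀ * exp (2 * t) * cosh (2 * x) := by rw [hRb]
  have hpt_tx : pt Rb t x = 2 * (R₀ * exp (2 * t) * cosh (2 * x)) := hRb ▸ pt_background R₀ t x
  have hpx_tx : px Rb t x = 2 * (R₀ * exp (2 * t) * sinh (2 * x)) := hRb ▸ px_background R₀ t x
  have hr := hRpos t x ht₀
  have hB : 0 < R₀ * exp (2 * t) * cosh (2 * x) := by positivity
  have hE : m ≤ (t + 1) * m := le_mul_of_one_le_left hm (by linarith)
  obtain ⟨het, hex, hG⟩ := coefficient_estimates_at hB hr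
    (by simpa [hRb_tx, div_le_iff₀ hr] using (hcomp t x ht₀).2) (abs_of_pos (by positivity)).le
    (abs_px_background_le t x hR₀.le) (by simpa [hRb_tx] using h0 t x ht₀)
    (by simpa [hpt_tx] using (ht t x ht₀).trans hE) (by simpa [hpx_tx] using (hx t x ht₀).trans hE)
  rw [hRb_tx, hpt_tx, hpx_tx, ← background_potential t x hR₀.ne']
  set e := 3 * d * ((t + 1) * m) / (R₀ * exp (2 * t) * cosh (2 * x))
  have he : 0 ≤ e := (abs_nonneg _).trans het
  have heK : e ≤ K := by
    rw [div_le_div_iff₀ hB hR₀]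
    calc 3 * d * ((t + 1) * m) * R₀ = 3 * d * m * R₀ * (t + 1) := by ring
      _ ≤ 3 * d * m * R₀ * (exp (2 * t) * cosh (2 * x)) := by
        gcongr; exact add_one_le_exp_two_mul_mul_cosh ht₀ x
      _ = 3 * d * m * (R₀ * exp (2 * t) * cosh (2 * x)) := by ring
  have hRHS : 3 * d * (2 + K) / R₀ * (t + 1) * m / (exp (2 * t) * cosh (2 * x)) = (2 + K) * e := by
    simp only [e]; field_simp
  have he_le : e ≤ (2 + K) * e := le_mul_of_one_le_left he (by linarith)
  rw [hRHS]
  exact ⟨het.trans he_le, hex.trans he_le, hG.trans (by gcongr)⟩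

/-- coefficient estimates for $R_t/R$, $R_x/R$ and $G$. -/
theorem statement8 (R₀ m d : ℝ) (hR₀ : 0 < R₀) (hm : 0 ≤ m) (hd : 1 ≤ d)
    (R Rb : ℝ → ℝ → ℝ)
    (hRb : Rb = fun t x => R₀ * Real.exp (2 * t) * Real.cosh (2 * x))
    (hsmooth : ContDiff ℝ 1 (fun p : ℝ × ℝ => R p.1 p.2))
    (hRpos : ∀ t x, 0 ≤ t → 0 < R t x)
    (hcomp : ∀ t x, 0 ≤ t → 1 / d ≤ Rb t x / R t x ∧ Rb t x / R t x ≤ d)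
    (h0 : ∀ t x, 0 ≤ t → |R t x - Rb t x| ≤ (t + 1) * m)
    (hx : ∀ t x, 0 ≤ t → |px R t x - px Rb t x| ≤ m)
    (ht : ∀ t x, 0 ≤ t → |pt R t x - pt Rb t x| ≤ m) :
    ∃ C : ℝ, 0 < C ∧ ∀ t x, 0 ≤ t →
      |pt R t x / R t x - pt Rb t x / Rb t x|
          ≤ C * (t + 1) * m / (Real.exp (2 * t) * Real.cosh (2 * x)) ∧
      |px R t x / R t x - px Rb t x / Rb t x|
          ≤ C * (t + 1) * m / (Real.exp (2 * t) * Real.cosh (2 * x)) ∧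
      |((pt R t x) ^ 2 - (px R t x) ^ 2) / (4 * (R t x) ^ 2) - 1 / (Real.cosh (2 * x)) ^ 2|
          ≤ C * (t + 1) * m / (Real.exp (2 * t) * Real.cosh (2 * x)) :=
  statement8_general R₀ m d hR₀ hm hd R Rb hRb hRpos hcomp h0 hx ht
end

section
/- Let E(t) = (1/2)∫_ℝ (z_t² + z_x² + z² G_b) dx with G_b(x) = 1/cosh²(2x). Suppose z is a smooth solution of z_tt − z_xx + zG = g on [0,∞)×ℝ, of locally x-compact support, with |G − G_b|(t,x) ≤ K(t+1)e^{−2t}/cosh(2x) and |g|(t,x) ≤ K(t+1)e^{−t}/cosh^{3/2}(2x) for constants K. Then there is a constant C (depending only on K) with E(t)^{1/2} ≤ C(E(0)^{1/2} + K) for all t ≥ 0. -/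
set_option maxHeartbeats 1000000


open Real MeasureTheory Filter

lemma sqrt_add_le' (a b : ℝ) (ha : 0 ≤ a) (hb : 0 ≤ b) :
    Real.sqrt (a + b) ≤ Real.sqrt a + Real.sqrt b := by
  rw [show Real.sqrt a + Real.sqrt b = Real.sqrt ((Real.sqrt a + Real.sqrt b)^2) by
    rw [Real.sqrt_sq (by positivity)]]
  apply Real.sqrt_le_sqrt
  nlinarith [Real.sq_sqrt ha, Real.sq_sqrt hb, Real.sqrt_nonneg a, Real.sqrt_nonneg b]

lemma one_add_sq_le_cosh (x : ℝ) : 1 + x ^ 2 ≤ Real.cosh (2 * x) := by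
  have h1 : Real.cosh (2 * x) = 2 * Real.sinh x ^ 2 + 1 := by
    rw [Real.cosh_two_mul, Real.cosh_sq]; ring
  have h2 : x ^ 2 ≤ Real.sinh x ^ 2 := by
    rcases le_or_gt 0 x with hx | hx
    · have := Real.self_le_sinh_iff.2 hx
      nlinarith [Real.sinh_nonneg_iff.2 hx]
    · have hx' : 0 ≤ -x := by linarith
      have := Real.self_le_sinh_iff.2 hx'
      rw [Real.sinh_neg] at this
      nlinarith
  nlinarith


lemma hasDerivAt_par1 (f : ℝ × ℝ → ℝ) {t x : ℝ} (hf : DifferentiableAt ℝ f (t, x)) :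
    HasDerivAt (fun s => f (s, x)) (fderiv ℝ f (t, x) (1, 0)) t :=
  hf.hasFDerivAt.comp_hasDerivAt t ((hasDerivAt_id t).prodMk (hasDerivAt_const t x))

lemma hasDerivAt_par2 (f : ℝ × ℝ → ℝ) {t x : ℝ} (hf : DifferentiableAt ℝ f (t, x)) :
    HasDerivAt (fun y => f (t, y)) (fderiv ℝ f (t, x) (0, 1)) x :=
  hf.hasFDerivAt.comp_hasDerivAt x ((hasDerivAt_const x t).prodMk (hasDerivAt_id x))

/-- locally x-compact support -/
def LocXCompact (u : ℝ → ℝ → ℝ) : Prop :=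
  ∀ T₁ T₂ : ℝ, ∃ K : Set ℝ, IsCompact K ∧
    ∀ t x, t ∈ Set.Icc T₁ T₂ → x ∉ K → u t x = 0

/-- the basic energy inequality. -/
theorem statement9 (K : ℝ) (hK : 0 ≤ K) (z G g : ℝ → ℝ → ℝ)
    (hz : ContDiff ℝ (⊤ : ℕ∞) (fun p : ℝ × ℝ => z p.1 p.2))
    (hsupp : LocXCompact z)
    (hG : Continuous (fun p : ℝ × ℝ => G p.1 p.2))
    (hg : Continuous (fun p : ℝ × ℝ => g p.1 p.2))
    (hpde : ∀ t x, 0 ≤ t →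
      pt (pt z) t x - px (px z) t x + z t x * G t x = g t x)
    (hGest : ∀ t x, 0 ≤ t →
      |G t x - 1 / (Real.cosh (2 * x)) ^ 2|
        ≤ K * (t + 1) * Real.exp (-(2 * t)) / Real.cosh (2 * x))
    (hgest : ∀ t x, 0 ≤ t →
      |g t x| ≤ K * (t + 1) * Real.exp (-t) / (Real.cosh (2 * x)) ^ ((3 : ℝ) / 2))
    (E : ℝ → ℝ)
    (hE : E = fun t => (1 / 2) * ∫ x : ℝ,
      ((pt z t x) ^ 2 + (px z t x) ^ 2 + (z t x) ^ 2 * (1 / (Real.cosh (2 * x)) ^ 2))) :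
    ∃ C : ℝ, 0 < C ∧ ∀ t, 0 ≤ t →
      Real.sqrt (E t) ≤ C * (Real.sqrt (E 0) + K) := by
  set Z : ℝ × ℝ → ℝ := fun p => z p.1 p.2 with hZ
  set zt : ℝ × ℝ → ℝ := fun p => fderiv ℝ Z p (1, 0) with hzt
  set zx : ℝ × ℝ → ℝ := fun p => fderiv ℝ Z p (0, 1) with hzx
  set ztt : ℝ × ℝ → ℝ := fun p => fderiv ℝ zt p (1, 0) with hztt
  set ztx : ℝ × ℝ → ℝ := fun p => fderiv ℝ zt p (0, 1) with hztx
  set zxt : ℝ × ℝ → ℝ := fun p => fderiv ℝ zx p (1, 0) with hzxt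
  set zxx : ℝ × ℝ → ℝ := fun p => fderiv ℝ zx p (0, 1) with hzxx
  have hZd : Differentiable ℝ Z := hz.differentiable (by simp)
  have hfd : ContDiff ℝ (⊤ : ℕ∞) (fderiv ℝ Z) := hz.fderiv_right (by simp)
  have hztc : ContDiff ℝ (⊤ : ℕ∞) zt := hfd.clm_apply contDiff_const
  have hzxc : ContDiff ℝ (⊤ : ℕ∞) zx := hfd.clm_apply contDiff_const
  have httc : ContDiff ℝ (⊤ : ℕ∞) ztt := (hztc.fderiv_right (by simp)).clm_apply contDiff_const
  have htxc : ContDiff ℝ (⊤ : ℕ∞) ztx := (hztc.fderiv_right (by simp)).clm_apply contDiff_const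
  have hxtc : ContDiff ℝ (⊤ : ℕ∞) zxt := (hzxc.fderiv_right (by simp)).clm_apply contDiff_const
  have hxxc : ContDiff ℝ (⊤ : ℕ∞) zxx := (hzxc.fderiv_right (by simp)).clm_apply contDiff_const
  -- identifications
  have hpt : ∀ t x, pt z t x = zt (t, x) := fun t x =>
    (hasDerivAt_par1 Z (hZd (t, x))).deriv
  have hpx : ∀ t x, px z t x = zx (t, x) := fun t x =>
    (hasDerivAt_par2 Z (hZd (t, x))).deriv
  have hptt : ∀ t x, pt (pt z) t x = ztt (t, x) := by
    intro t x
    have : (fun s => pt z s x) = fun s => zt (s, x) := funext fun s => hpt s x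
    rw [pt, this]
    exact (hasDerivAt_par1 zt ((hztc.differentiable (by simp)) (t, x))).deriv
  have hpxx : ∀ t x, px (px z) t x = zxx (t, x) := by
    intro t x
    have : (fun y => px z t y) = fun y => zx (t, y) := funext fun y => hpx t y
    rw [px, this]
    exact (hasDerivAt_par2 zx ((hzxc.differentiable (by simp)) (t, x))).deriv
  -- symmetry of second derivatives
  have hsymm : ∀ p : ℝ × ℝ, ztx p = zxt p := by
    intro p
    have hfd2 : DifferentiableAt ℝ (fderiv ℝ Z) p := (hfd.differentiable (by simp)) p
    have e1 : HasFDerivAt zt ((ContinuousLinearMap.apply ℝ ℝ ((1 : ℝ), (0 : ℝ))).comp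
        (fderiv ℝ (fderiv ℝ Z) p)) p :=
      (ContinuousLinearMap.apply ℝ ℝ ((1 : ℝ), (0 : ℝ))).hasFDerivAt.comp p hfd2.hasFDerivAt
    have e2 : HasFDerivAt zx ((ContinuousLinearMap.apply ℝ ℝ ((0 : ℝ), (1 : ℝ))).comp
        (fderiv ℝ (fderiv ℝ Z) p)) p :=
      (ContinuousLinearMap.apply ℝ ℝ ((0 : ℝ), (1 : ℝ))).hasFDerivAt.comp p hfd2.hasFDerivAt
    have hs := second_derivative_symmetric (f := Z) (f' := fderiv ℝ Z)
      (f'' := fderiv ℝ (fderiv ℝ Z) p) (fun y => (hZd y).hasFDerivAt) hfd2.hasFDerivAt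
      (0, 1) (1, 0)
    show fderiv ℝ zt p (0, 1) = fderiv ℝ zx p (1, 0)
    rw [e1.fderiv, e2.fderiv]
    simpa using hs
  -- vanishing outside compact sets
  have hvan : ∀ t₀ : ℝ, ∃ S : Set ℝ, IsCompact S ∧ ∀ s x, s ∈ Set.Ioo (t₀-2) (t₀+2) → x ∉ S →
      Z (s,x) = 0 ∧ zt (s,x) = 0 ∧ zx (s,x) = 0 ∧ ztt (s,x) = 0 ∧ ztx (s,x) = 0 ∧
      zxt (s,x) = 0 ∧ zxx (s,x) = 0 := by
    intro t₀
    obtain ⟨S, hSc, hS0⟩ := hsupp (t₀-2) (t₀+2)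
    refine ⟨S, hSc, ?_⟩
    set U : Set (ℝ × ℝ) := Set.Ioo (t₀-2) (t₀+2) ×ˢ Sᶜ with hU
    have hUo : IsOpen U := isOpen_Ioo.prod hSc.isClosed.isOpen_compl
    have hZ0 : ∀ p ∈ U, Z p = 0 := by
      rintro ⟨s, x⟩ ⟨hs, hx⟩
      exact hS0 s x (Set.mem_Icc.2 ⟨le_of_lt hs.1, le_of_lt hs.2⟩) hx
    have hfd0 : ∀ p ∈ U, fderiv ℝ Z p = 0 := by
      intro p hp
      have : Z =ᶠ[nhds p] (fun _ => (0:ℝ)) :=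
        Filter.eventually_of_mem (hUo.mem_nhds hp) hZ0
      rw [this.fderiv_eq, fderiv_fun_const]; rfl
    have hzt0 : ∀ p ∈ U, zt p = 0 := fun p hp => by show fderiv ℝ Z p (1,0) = 0; rw [hfd0 p hp]; rfl
    have hzx0 : ∀ p ∈ U, zx p = 0 := fun p hp => by show fderiv ℝ Z p (0,1) = 0; rw [hfd0 p hp]; rfl
    have hfzt0 : ∀ p ∈ U, fderiv ℝ zt p = 0 := by
      intro p hp
      have : zt =ᶠ[nhds p] (fun _ => (0:ℝ)) :=
        Filter.eventually_of_mem (hUo.mem_nhds hp) hzt0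
      rw [this.fderiv_eq, fderiv_fun_const]; rfl
    have hfzx0 : ∀ p ∈ U, fderiv ℝ zx p = 0 := by
      intro p hp
      have : zx =ᶠ[nhds p] (fun _ => (0:ℝ)) :=
        Filter.eventually_of_mem (hUo.mem_nhds hp) hzx0
      rw [this.fderiv_eq, fderiv_fun_const]; rfl
    intro s x hs hx
    have hp : (s, x) ∈ U := ⟨hs, hx⟩
    refine ⟨hZ0 _ hp, hzt0 _ hp, hzx0 _ hp, ?_, ?_, ?_, ?_⟩
    · show fderiv ℝ zt (s,x) (1,0) = 0; rw [hfzt0 _ hp]; rfl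
    · show fderiv ℝ zt (s,x) (0,1) = 0; rw [hfzt0 _ hp]; rfl
    · show fderiv ℝ zx (s,x) (1,0) = 0; rw [hfzx0 _ hp]; rfl
    · show fderiv ℝ zx (s,x) (0,1) = 0; rw [hfzx0 _ hp]; rfl
  -- the energy integrand and its time derivative
  set F : ℝ → ℝ → ℝ := fun s x =>
    zt (s,x)^2 + zx (s,x)^2 + Z (s,x)^2 * (1/(Real.cosh (2*x))^2) with hF
  set F' : ℝ → ℝ → ℝ := fun s x =>
    2*zt (s,x)*ztt (s,x) + 2*zx (s,x)*zxt (s,x)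
      + 2*Z (s,x)*zt (s,x)*(1/(Real.cosh (2*x))^2) with hF'
  have hFderiv : ∀ s x, HasDerivAt (fun s => F s x) (F' s x) s := by
    intro s x
    have h1 : HasDerivAt (fun s => zt (s,x)) (ztt (s,x)) s :=
      hasDerivAt_par1 zt (hztc.differentiable (by simp) (s,x))
    have h2 : HasDerivAt (fun s => zx (s,x)) (zxt (s,x)) s :=
      hasDerivAt_par1 zx (hzxc.differentiable (by simp) (s,x))
    have h3 : HasDerivAt (fun s => Z (s,x)) (zt (s,x)) s :=
      hasDerivAt_par1 Z (hZd (s,x))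
    have := ((h1.pow 2).add (h2.pow 2)).add ((h3.pow 2).mul_const (1/(Real.cosh (2*x))^2))
    refine this.congr_deriv ?_
    ring
  have hcont_pair : ∀ f : ℝ × ℝ → ℝ, Continuous f →
      Continuous (fun p : ℝ × ℝ => f (p.1, p.2)) := by
    intro f hf; exact hf.comp (continuous_fst.prodMk continuous_snd)
  have hwc : Continuous (fun p : ℝ × ℝ => 1/(Real.cosh (2*p.2))^2) :=
    continuous_const.div
      ((Real.continuous_cosh.comp (continuous_const.mul continuous_snd)).pow 2)
      (fun p => by positivity)
  have hFc : Continuous (fun p : ℝ × ℝ => F p.1 p.2) := by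
    apply Continuous.add
    apply Continuous.add
    · exact (hcont_pair zt (hztc.continuous)).pow 2
    · exact (hcont_pair zx (hzxc.continuous)).pow 2
    · exact ((hcont_pair Z (hz.continuous)).pow 2).mul hwc
  have hF'c : Continuous (fun p : ℝ × ℝ => F' p.1 p.2) := by
    apply Continuous.add
    apply Continuous.add
    · exact (continuous_const.mul (hcont_pair zt hztc.continuous)).mul
        (hcont_pair ztt httc.continuous)
    · exact (continuous_const.mul (hcont_pair zx hzxc.continuous)).mul
        (hcont_pair zxt hxtc.continuous)
    · exact ((continuous_const.mul (hcont_pair Z hz.continuous)).mul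
        (hcont_pair zt hztc.continuous)).mul hwc
  -- integrability of F and F' at each time
  have hmem : ∀ t₀ : ℝ, t₀ ∈ Set.Ioo (t₀-2) (t₀+2) := by
    intro t₀; constructor <;> linarith
  have hFint : ∀ t₀ : ℝ, Integrable (F t₀) := by
    intro t₀
    obtain ⟨S, hSc, hv⟩ := hvan t₀
    apply Continuous.integrable_of_hasCompactSupport
    · exact hFc.comp (Continuous.prodMk continuous_const continuous_id)
    · apply HasCompactSupport.intro hSc
      intro x hx
      obtain ⟨e0, e1, e2, _, _, _, _⟩ := hv t₀ x (hmem t₀) hx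
      simp only [hF, e0, e1, e2]; ring
  -- derivative of the energy integral
  have hED : ∀ t₀ : ℝ, HasDerivAt (fun t => ∫ x, F t x) (∫ x, F' t₀ x) t₀ := by
    intro t₀
    obtain ⟨S, hSc, hv⟩ := hvan t₀
    obtain ⟨M, hM⟩ := (isCompact_Icc.prod hSc).exists_bound_of_continuousOn
      (f := fun p : ℝ × ℝ => F' p.1 p.2) hF'c.continuousOn
    have h_bound : ∀ᵐ x : ℝ, ∀ s ∈ Metric.ball t₀ 1,
        ‖F' s x‖ ≤ S.indicator (fun _ => M) x := by
      refine Filter.Eventually.of_forall fun x => fun s hs => ?_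
      rw [Metric.mem_ball, Real.dist_eq] at hs
      by_cases hx : x ∈ S
      · rw [Set.indicator_of_mem hx]
        have : (s, x) ∈ Set.Icc (t₀-1) (t₀+1) ×ˢ S :=
          ⟨Set.mem_Icc.2 ⟨by cases abs_lt.1 hs; linarith, by cases abs_lt.1 hs; linarith⟩, hx⟩
        exact hM (s, x) this
      · rw [Set.indicator_of_notMem hx]
        obtain ⟨e0, e1, e2, e3, e4, e5, e6⟩ := hv s x
          ⟨by cases abs_lt.1 hs; linarith, by cases abs_lt.1 hs; linarith⟩ hx
        have : F' s x = 0 := by simp only [hF', e0, e1, e2, e3, e5]; ring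
        simp [this]
    have hbi : Integrable (S.indicator (fun _ => M)) := by
      rw [integrable_indicator_iff hSc.measurableSet]
      exact integrableOn_const hSc.measure_lt_top.ne
    exact (hasDerivAt_integral_of_dominated_loc_of_deriv_le (F := F) (F' := F')
      (bound := S.indicator fun _ => M) (Metric.ball_mem_nhds t₀ one_pos)
      (Filter.Eventually.of_forall fun t =>
        (hFc.comp (Continuous.prodMk continuous_const continuous_id)).aestronglyMeasurable)
      (hFint t₀)
      ((hF'c.comp (Continuous.prodMk continuous_const continuous_id)).aestronglyMeasurable)
      h_bound hbi
      (Filter.Eventually.of_forall fun x => fun s _ => hFderiv s x)).2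
  have hzZ : ∀ t x, z t x = Z (t,x) := fun _ _ => rfl
  set al : ℝ → ℝ := fun t => K*(t+1)*Real.exp (-(2*t)) with hal
  set be : ℝ → ℝ := fun t => K*(t+1)*Real.exp (-t) with hbe
  have hal0 : ∀ t, 0 ≤ t → 0 ≤ al t := fun t ht => by positivity
  have hbe0 : ∀ t, 0 ≤ t → 0 ≤ be t := fun t ht => by positivity
  -- key derivative bound
  have hkey : ∀ t, 0 ≤ t → ∫ x, F' t x ≤ (al t + be t) * (∫ x, F t x) + be t * π := by
    intro t ht
    obtain ⟨S, hSc, hv⟩ := hvan t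
    have hmk : ContDiff ℝ (⊤ : ℕ∞) (fun y : ℝ => ((t,y) : ℝ × ℝ)) := contDiff_const.prodMk contDiff_id
    set f : ℝ → ℝ := fun y => zt (t,y) * zx (t,y) with hf1
    have hfC : ContDiff ℝ 1 f := ((hztc.comp hmk).mul (hzxc.comp hmk)).of_le (by simp)
    have hfder : ∀ y, HasDerivAt f (ztx (t,y)*zx (t,y) + zt (t,y)*zxx (t,y)) y := fun y =>
      (hasDerivAt_par2 zt (hztc.differentiable (by simp) _)).mul
        (hasDerivAt_par2 zx (hzxc.differentiable (by simp) _))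
    have hfd' : deriv f = fun y => ztx (t,y)*zx (t,y) + zt (t,y)*zxx (t,y) :=
      funext fun y => (hfder y).deriv
    have hfsupp : HasCompactSupport f := by
      apply HasCompactSupport.intro hSc
      intro x hx
      obtain ⟨_, e1, _, _, _, _, _⟩ := hv t x (hmem t) hx
      simp only [hf1, e1]; ring
    have hderc : Continuous (deriv f) := by
      rw [hfd']
      exact ((hcont_pair ztx htxc.continuous).comp hmk.continuous |>.mul
        ((hcont_pair zx hzxc.continuous).comp hmk.continuous)).add
        (((hcont_pair zt hztc.continuous).comp hmk.continuous).mul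
        ((hcont_pair zxx hxxc.continuous).comp hmk.continuous))
    have hderint : Integrable (deriv f) :=
      hderc.integrable_of_hasCompactSupport hfsupp.deriv
    have hintf0 : ∫ y, deriv f y = 0 := by
      rw [← intervalIntegral.integral_Iic_add_Ioi (b := 0) hderint.integrableOn hderint.integrableOn,
        HasCompactSupport.integral_Iic_deriv_eq hfC hfsupp 0,
        HasCompactSupport.integral_Ioi_deriv_eq hfC hfsupp 0]
      ring
    -- lower-order term
    set q : ℝ → ℝ := fun x =>
      2*Z (t,x)*zt (t,x)*(1/(Real.cosh (2*x))^2 - G t x) + 2*zt (t,x)*(g t x) with hq1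
    have hqc : Continuous q := by
      apply Continuous.add
      · exact (((continuous_const.mul ((hcont_pair Z hz.continuous).comp hmk.continuous)).mul
          ((hcont_pair zt hztc.continuous).comp hmk.continuous))).mul
          ((hwc.comp hmk.continuous).sub (hG.comp hmk.continuous))
      · exact (continuous_const.mul ((hcont_pair zt hztc.continuous).comp hmk.continuous)).mul
          (hg.comp hmk.continuous)
    have hqint : Integrable q := by
      apply hqc.integrable_of_hasCompactSupport
      apply HasCompactSupport.intro hSc
      intro x hx
      obtain ⟨e0, e1, _, _, _, _, _⟩ := hv t x (hmem t) hx
      simp only [hq1, e0, e1]; ring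
    -- pointwise identity using the PDE and symmetry of second derivatives
    have hpw : ∀ x, F' t x = 2*(deriv f x) + q x := by
      intro x
      have hpd : ztt (t,x) = zxx (t,x) - Z (t,x) * G t x + g t x := by
        have := hpde t x ht
        rw [hptt, hpxx, hzZ] at this
        linarith
      rw [hfd']
      simp only [hF', hq1, hpd, (hsymm (t,x)).symm]
      ring
    have hsplit : ∫ x, F' t x = ∫ x, q x := by
      rw [show (fun x => F' t x) = fun x => 2*(deriv f x) + q x from funext hpw,
        integral_add (hderint.const_mul 2) hqint, integral_const_mul, hintf0]
      ring
    -- pointwise bound on q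
    have hqb : ∀ x, q x ≤ (al t + be t) * F t x + be t * (1+x^2)⁻¹ := by
      intro x
      set c : ℝ := Real.cosh (2*x) with hc1
      have hcx : 1 + x^2 ≤ c := one_add_sq_le_cosh x
      have hc1' : 1 ≤ c := by nlinarith [sq_nonneg x]
      have hcp : 0 < c := by linarith
      -- first term
      have e1 : |G t x - 1/c^2| ≤ al t / c := hGest t x ht
      have t1 : 2*Z (t,x)*zt (t,x)*(1/c^2 - G t x)
          ≤ al t * (zt (t,x)^2 + Z (t,x)^2 * (1/c^2)) := by
        have h1 : 2*Z (t,x)*zt (t,x)*(1/c^2 - G t x) ≤ |2*Z (t,x)*zt (t,x)| * (al t / c) := by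
          calc 2*Z (t,x)*zt (t,x)*(1/c^2 - G t x)
              ≤ |2*Z (t,x)*zt (t,x)*(1/c^2 - G t x)| := le_abs_self _
            _ = |2*Z (t,x)*zt (t,x)| * |G t x - 1/c^2| := by
                rw [abs_mul, abs_sub_comm]
            _ ≤ |2*Z (t,x)*zt (t,x)| * (al t / c) :=
                mul_le_mul_of_nonneg_left e1 (abs_nonneg _)
        refine h1.trans ?_
        have h2 : |2*Z (t,x)*zt (t,x)| = 2 * |Z (t,x)| * |zt (t,x)| := by
          rw [abs_mul, abs_mul]; simp [abs_of_nonneg]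
        have h3 : 2 * |Z (t,x)| * |zt (t,x)| / c ≤ zt (t,x)^2 + Z (t,x)^2 * (1/c^2) := by
          have e2 : |zt (t,x)|^2 = zt (t,x)^2 := sq_abs _
          have e3 : |Z (t,x)|^2 = Z (t,x)^2 := sq_abs _
          have hid : (zt (t,x)^2 + Z (t,x)^2 * (1/c^2)) = (zt (t,x)^2*c^2 + Z (t,x)^2)/c^2 := by
            field_simp
          rw [div_le_iff₀ hcp, hid, div_mul_eq_mul_div, le_div_iff₀ (by positivity)]
          have key : 2 * |Z (t,x)| * |zt (t,x)| * c ≤ zt (t,x)^2 * c^2 + Z (t,x)^2 := by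
            nlinarith [sq_nonneg (|zt (t,x)| * c - |Z (t,x)|)]
          nlinarith [mul_le_mul_of_nonneg_right key hcp.le]
        calc |2*Z (t,x)*zt (t,x)| * (al t / c)
            = al t * (2 * |Z (t,x)| * |zt (t,x)| / c) := by rw [h2]; ring
          _ ≤ al t * (zt (t,x)^2 + Z (t,x)^2 * (1/c^2)) :=
              mul_le_mul_of_nonneg_left h3 (hal0 t ht)
      -- second term
      have t2 : 2*zt (t,x)*(g t x) ≤ be t * (zt (t,x)^2 + (1+x^2)⁻¹) := by
        set r : ℝ := c ^ ((3:ℝ)/2) with hr1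
        have hrpos : 0 < r := Real.rpow_pos_of_pos hcp _
        have hr2 : r^2 = c^3 := by
          rw [hr1, ← Real.rpow_natCast (c ^ ((3:ℝ)/2)) 2, ← Real.rpow_mul hcp.le]
          norm_num
        have e4 : |g t x| ≤ be t / r := hgest t x ht
        have h1 : 2*zt (t,x)*(g t x) ≤ 2*|zt (t,x)| * (be t / r) := by
          calc 2*zt (t,x)*(g t x) ≤ |2*zt (t,x)*(g t x)| := le_abs_self _
            _ = 2*|zt (t,x)| * |g t x| := by rw [abs_mul, abs_mul]; simp
            _ ≤ 2*|zt (t,x)| * (be t / r) :=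
                mul_le_mul_of_nonneg_left e4 (by positivity)
        refine h1.trans ?_
        have h3 : 2*|zt (t,x)| / r ≤ zt (t,x)^2 + 1/r^2 := by
          have e2 : |zt (t,x)|^2 = zt (t,x)^2 := sq_abs _
          have hid : (zt (t,x)^2 + 1/r^2) = (zt (t,x)^2*r^2 + 1)/r^2 := by
            field_simp
          rw [div_le_iff₀ hrpos, hid, div_mul_eq_mul_div, le_div_iff₀ (by positivity)]
          have key : 2 * |zt (t,x)| * r ≤ zt (t,x)^2 * r^2 + 1 := by
            nlinarith [sq_nonneg (|zt (t,x)| * r - 1)]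
          nlinarith [mul_le_mul_of_nonneg_right key hrpos.le]
        have h4 : 1/r^2 ≤ (1+x^2)⁻¹ := by
          rw [hr2, one_div]
          apply inv_anti₀ (by positivity)
          nlinarith [hc1', hcx, sq_nonneg (c-1)]
        calc 2*|zt (t,x)| * (be t / r) = be t * (2*|zt (t,x)| / r) := by ring
          _ ≤ be t * (zt (t,x)^2 + 1/r^2) :=
              mul_le_mul_of_nonneg_left h3 (hbe0 t ht)
          _ ≤ be t * (zt (t,x)^2 + (1+x^2)⁻¹) := by
              apply mul_le_mul_of_nonneg_left _ (hbe0 t ht)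
              linarith
      have hFt : F t x = zt (t,x)^2 + zx (t,x)^2 + Z (t,x)^2 * (1/c^2) := rfl
      have h5 : 0 ≤ zx (t,x)^2 := sq_nonneg _
      have h6 : 0 ≤ zt (t,x)^2 := sq_nonneg _
      have h7 : 0 ≤ Z (t,x)^2 * (1/c^2) := by positivity
      have hgoal : 2*Z (t,x)*zt (t,x)*(1/c^2 - G t x) + 2*zt (t,x)*(g t x)
          ≤ (al t + be t) * (zt (t,x)^2 + zx (t,x)^2 + Z (t,x)^2 * (1/c^2)) + be t * (1+x^2)⁻¹ := by
        nlinarith [mul_nonneg (hal0 t ht) h5, mul_nonneg (hbe0 t ht) h5,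
          mul_nonneg (hbe0 t ht) h7, t1, t2]
      simpa only [hq1, hFt] using hgoal
    -- integrate the bound
    rw [hsplit]
    calc ∫ x, q x ≤ ∫ x, ((al t + be t) * F t x + be t * (1+x^2)⁻¹) := by
          apply integral_mono hqint
            (((hFint t).const_mul _).add (integrable_inv_one_add_sq.const_mul _)) hqb
      _ = (al t + be t) * (∫ x, F t x) + be t * π := by
          rw [integral_add ((hFint t).const_mul _) (integrable_inv_one_add_sq.const_mul _),
            integral_const_mul, integral_const_mul, integral_univ_inv_one_add_sq]
  -- identification of E
  have hEF : E = fun t => (1/2) * ∫ x, F t x := by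
    rw [hE]; funext t
    have h : ∀ x, (pt z t x) ^ 2 + (px z t x) ^ 2 + (z t x) ^ 2 * (1 / (Real.cosh (2 * x)) ^ 2)
        = F t x := fun x => by rw [hpt, hpx, hzZ]
    simp only [h]
  have hEderiv : ∀ t, HasDerivAt E ((1/2) * ∫ x, F' t x) t := by
    intro t; rw [hEF]; exact (hED t).const_mul (1/2)
  have hEnn : ∀ t, 0 ≤ E t := by
    intro t; rw [hEF]
    have h : 0 ≤ ∫ x, F t x := integral_nonneg fun x => by
      have : F t x = zt (t,x)^2 + zx (t,x)^2 + Z (t,x)^2 * (1/(Real.cosh (2*x))^2) := rfl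
      rw [this]; positivity
    linarith
  -- Gronwall
  set A : ℝ → ℝ := fun t =>
    K*((3/4:ℝ) - (t/2+3/4)*Real.exp (-(2*t))) + K*(2 - (t+2)*Real.exp (-t)) with hA
  have hA0 : A 0 = 0 := by simp [hA]
  have hAd : ∀ t, HasDerivAt A (al t + be t) t := by
    intro t
    have he1 : HasDerivAt (fun t : ℝ => Real.exp (-(2*t))) (Real.exp (-(2*t)) * (-2)) t := by
      have : HasDerivAt (fun t : ℝ => -(2*t)) (-2) t := by
        simpa using ((hasDerivAt_id t).const_mul (2:ℝ)).fun_neg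
      simpa using this.exp
    have he2 : HasDerivAt (fun t : ℝ => Real.exp (-t)) (Real.exp (-t) * (-1)) t := by
      have : HasDerivAt (fun t : ℝ => -t) (-1) t := (hasDerivAt_id t).neg
      simpa using this.exp
    have hp1 : HasDerivAt (fun t : ℝ => t/2 + 3/4) (1/2) t := by
      simpa using ((hasDerivAt_id t).div_const (2:ℝ)).add_const (3/4:ℝ)
    have hp2 : HasDerivAt (fun t : ℝ => t + 2) 1 t := by
      simpa using (hasDerivAt_id t).add_const (2:ℝ)
    have h1 := ((hp1.mul he1).const_sub ((3/4:ℝ))).const_mul K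
    have h2 := ((hp2.mul he2).const_sub ((2:ℝ))).const_mul K
    have := h1.add h2
    refine this.congr_deriv ?_
    simp only [hal, hbe]
    ring
  have hAle : ∀ t, 0 ≤ t → A t ≤ 11*K/4 := by
    intro t ht
    have e1 : 0 ≤ (t/2+3/4)*Real.exp (-(2*t)) := by positivity
    have e2 : 0 ≤ (t+2)*Real.exp (-t) := by positivity
    simp only [hA]
    nlinarith
  set Φ : ℝ → ℝ := fun t => (E t + π/2) * Real.exp (-(A t)) with hPhi
  have hPhid : ∀ t, HasDerivAt Φ
      (((1/2) * ∫ x, F' t x) * Real.exp (-(A t))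
        + (E t + π/2) * (Real.exp (-(A t)) * (-(al t + be t)))) t := fun t =>
    ((hEderiv t).add_const (π/2)).mul ((hAd t).neg.exp)
  have hPhimono : AntitoneOn Φ (Set.Ici 0) := by
    apply antitoneOn_of_deriv_nonpos (convex_Ici 0)
    · exact (Differentiable.continuous fun t => (hPhid t).differentiableAt).continuousOn
    · intro x hx; exact (hPhid x).differentiableAt.differentiableWithinAt
    · intro x hx
      rw [interior_Ici] at hx
      have hx0 : (0:ℝ) ≤ x := le_of_lt hx
      rw [(hPhid x).deriv]
      have hb := hkey x hx0
      have hEx : E x = (1/2) * ∫ x', F x x' := by rw [hEF]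
      have hexp : 0 < Real.exp (-(A x)) := Real.exp_pos _
      have hbn : 0 ≤ be x := hbe0 x hx0
      have han : 0 ≤ al x := hal0 x hx0
      have h2 : (1/2) * (∫ x', F' x x') ≤ (al x + be x) * (E x + π/2) := by
        rw [hEx]
        nlinarith [hb, mul_nonneg han pi_pos.le]
      nlinarith [mul_le_mul_of_nonneg_right h2 hexp.le]
  have hEbound : ∀ t, 0 ≤ t → E t + π/2 ≤ (E 0 + π/2) * Real.exp (11*K/4) := by
    intro t ht
    have h1 : Φ t ≤ Φ 0 := hPhimono Set.self_mem_Ici (Set.mem_Ici.2 ht) ht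
    have h0 : Φ 0 = E 0 + π/2 := by simp [hPhi, hA0]
    have h2 : (E t + π/2) * Real.exp (-(A t)) ≤ E 0 + π/2 := by
      rw [← h0]; exact h1
    have e3 : Real.exp (A t) ≤ Real.exp (11*K/4) := Real.exp_le_exp.2 (hAle t ht)
    have e4 : E t + π/2 = ((E t + π/2) * Real.exp (-(A t))) * Real.exp (A t) := by
      rw [mul_assoc, ← Real.exp_add]; simp
    have hE0n : 0 ≤ E 0 + π/2 := by have := hEnn 0; have := pi_pos; linarith
    rw [e4]
    calc ((E t + π/2) * Real.exp (-(A t))) * Real.exp (A t)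
        ≤ (E 0 + π/2) * Real.exp (A t) :=
          mul_le_mul_of_nonneg_right h2 (Real.exp_pos _).le
      _ ≤ (E 0 + π/2) * Real.exp (11*K/4) := mul_le_mul_of_nonneg_left e3 hE0n
  -- conclusion
  by_cases hK0 : K = 0
  · refine ⟨1, one_pos, fun t ht => ?_⟩
    have h := hEbound t ht
    rw [hK0] at h
    norm_num at h
    have hEt : E t ≤ E 0 := by linarith
    rw [hK0]
    simpa using Real.sqrt_le_sqrt hEt
  · have hKpos : 0 < K := lt_of_le_of_ne hK (Ne.symm hK0)
    refine ⟨Real.exp (11*K/8) * (1 + Real.sqrt (π/2) / K), by positivity, fun t ht => ?_⟩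
    have h := hEbound t ht
    have hpi : (0:ℝ) < π := pi_pos
    have h1 : E t ≤ (E 0 + π/2) * Real.exp (11*K/4) := by linarith
    have hE0n : 0 ≤ E 0 + π/2 := by have := hEnn 0; linarith
    have h2 : Real.sqrt (E t) ≤ Real.sqrt ((E 0 + π/2) * Real.exp (11*K/4)) :=
      Real.sqrt_le_sqrt h1
    have h3 : Real.sqrt ((E 0 + π/2) * Real.exp (11*K/4))
        = Real.sqrt (E 0 + π/2) * Real.exp (11*K/8) := by
      rw [Real.sqrt_mul hE0n]
      congr 1
      rw [show (11*K/4) = (11*K/8) + (11*K/8) by ring, Real.exp_add,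
        Real.sqrt_mul_self (Real.exp_nonneg _)]
    have h4 : Real.sqrt (E 0 + π/2) ≤ Real.sqrt (E 0) + Real.sqrt (π/2) :=
      sqrt_add_le' _ _ (hEnn 0) (by positivity)
    have h5 : Real.sqrt (E t) ≤ (Real.sqrt (E 0) + Real.sqrt (π/2)) * Real.exp (11*K/8) := by
      rw [h3] at h2
      exact h2.trans (mul_le_mul_of_nonneg_right h4 (Real.exp_nonneg _))
    refine h5.trans ?_
    have hs0 : 0 ≤ Real.sqrt (E 0) := Real.sqrt_nonneg _
    have hsp : 0 ≤ Real.sqrt (π/2) := Real.sqrt_nonneg _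
    have hexp8 : 0 < Real.exp (11*K/8) := Real.exp_pos _
    have key : Real.exp (11*K/8) * (1 + Real.sqrt (π/2) / K) * (Real.sqrt (E 0) + K)
        = Real.exp (11*K/8) * Real.sqrt (E 0) + Real.exp (11*K/8) * K
          + Real.exp (11*K/8) * (Real.sqrt (π/2) * Real.sqrt (E 0)) / K
          + Real.exp (11*K/8) * Real.sqrt (π/2) := by
      field_simp
      ring
    rw [key]
    have e5 : 0 ≤ Real.exp (11*K/8) * (Real.sqrt (π/2) * Real.sqrt (E 0)) / K := by positivity
    have e6 : 0 < Real.exp (11*K/8) * K := mul_pos hexp8 hKpos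
    nlinarith []
end
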